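/- arXiv:1905.00206 — 2 statements merged into one kernel-verified Lean document; each statement's English description precedes it below -/
import Mathlib

section
/- Let g : Ω × ℝ² → ℝ be a jointly measurable random field such that for every t ∈ ℝ² the random variable g(·,t) has the centered Gaussian distribution N(0,σ²) with σ > 0, let X be a real random variable with E[X] = 0 and E[|X|³] < ∞ such that X is independent of g(·,t) for every t, and let ε > 0. Let T ⊆ ℝ² be a measurable set with 0 < λ(T) < ∞ and u ∈ ℝ. Then the normalized mean excursion area of the perturbed field f(t) = g(t) + εX satisfies | E[λ({t ∈ T : g(ω,t) + εX(ω) ≥ u})]/λ(T) − Ψ(u/σ) − (ε² E[X²]/(2σ²)) Ψ''(u/σ) | ≤ ε³ E[|X|³]/(6 σ³ √(2π)). -/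
open MeasureTheory ProbabilityTheory

/-- The standard Gaussian tail function `Ψ(x) = (2π)^{-1/2} ∫_x^∞ e^{-t²/2} dt`. -/
noncomputable def Psi (x : ℝ) : ℝ :=
  ∫ t in Set.Ioi x, (Real.sqrt (2 * Real.pi))⁻¹ * Real.exp (-t ^ 2 / 2)

/-- Second derivative of the Gaussian tail: `Ψ''(x) = (2π)^{-1/2} x e^{-x²/2}`. -/
noncomputable def PsiD2 (x : ℝ) : ℝ :=
  (Real.sqrt (2 * Real.pi))⁻¹ * x * Real.exp (-x ^ 2 / 2)

/-!
By Tonelli, the mean excursion area is `∫_T P(u ≤ g(t) + εX) dt`. Since `X` is independent of the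
`N(0, σ²)` variable `g(t)`, each of these probabilities equals `E[Ψ(u/σ - (ε/σ) X)]`, so the
normalized mean area is that expectation. Expanding `Ψ` to second order at `u/σ`, with third
derivative `(1 - x²) φ(x)` bounded by `(2π)^{-1/2}`, and using `E[X] = 0` gives the expansion with
the cubic remainder.
-/

open scoped ENNReal Nat

lemma abs_sub_sum_iteratedDeriv_le {f : ℝ → ℝ} {n : ℕ} {M : ℝ}
    (hf : ContDiff ℝ (n + 1) f) (hM : ∀ x, |iteratedDeriv (n + 1) f x| ≤ M) (x₀ x : ℝ) :
    |f x - ∑ k ∈ Finset.range (n + 1), iteratedDeriv k f x₀ * (x - x₀) ^ k / k !|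
      ≤ M * |x - x₀| ^ (n + 1) / (n + 1)! := by
  rcases eq_or_ne x₀ x with rfl | hx
  · simp [Finset.sum_range_succ']
  obtain ⟨ξ, -, hξ⟩ := taylor_mean_remainder_lagrange_iteratedDeriv hx hf.contDiffOn
  have hpoly : taylorWithinEval f n (Set.uIcc x₀ x) x₀ x
      = ∑ k ∈ Finset.range (n + 1), iteratedDeriv k f x₀ * (x - x₀) ^ k / k ! := by
    rw [taylor_within_apply]
    refine Finset.sum_congr rfl fun k hk => ?_
    rw [iteratedDerivWithin_eq_iteratedDeriv (uniqueDiffOn_uIcc hx)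
      (hf.contDiffAt.of_le (by exact_mod_cast (Finset.mem_range.mp hk).le)) Set.left_mem_uIcc,
      smul_eq_mul]
    ring
  rw [← hpoly, hξ, abs_div, abs_mul, abs_pow, abs_of_pos (by positivity : (0:ℝ) < (n + 1)!)]
  gcongr
  exact hM ξ

lemma gaussianPDFReal_zero_one (x : ℝ) :
    gaussianPDFReal 0 1 x = (Real.sqrt (2 * Real.pi))⁻¹ * Real.exp (-x ^ 2 / 2) := by
  simp [gaussianPDFReal]

lemma Psi_eq_setIntegral_gaussianPDFReal (x : ℝ) :
    Psi x = ∫ t in Set.Ioi x, gaussianPDFReal 0 1 t := by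
  simp only [Psi, gaussianPDFReal_zero_one]

lemma hasDerivAt_gaussianPDFReal_zero_one (x : ℝ) :
    HasDerivAt (gaussianPDFReal 0 1) (-x * gaussianPDFReal 0 1 x) x := by
  have hexponent : HasDerivAt (fun y : ℝ => -y ^ 2 / 2) (-x) x :=
    ((hasDerivAt_pow 2 x).neg.div_const 2).congr_deriv (by push_cast; ring)
  simp only [funext gaussianPDFReal_zero_one]
  exact (hexponent.exp.const_mul _).congr_deriv (by ring)

lemma hasDerivAt_Psi (x : ℝ) : HasDerivAt Psi (-gaussianPDFReal 0 1 x) x := by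
  have hint : ∀ y, IntegrableOn (gaussianPDFReal 0 1) (Set.Ioi y) :=
    fun y => (integrable_gaussianPDFReal 0 1).integrableOn
  have hPsi : Psi = fun y => Psi 0 - ∫ t in (0 : ℝ)..y, gaussianPDFReal 0 1 t := by
    ext y
    rw [Psi_eq_setIntegral_gaussianPDFReal, Psi_eq_setIntegral_gaussianPDFReal,
      ← intervalIntegral.integral_Ioi_sub_Ioi' (hint 0) (hint y)]
    ring
  rw [hPsi]
  have hc : Continuous (gaussianPDFReal 0 1) := continuous_iff_continuousAt.2 fun y =>
    (hasDerivAt_gaussianPDFReal_zero_one y).continuousAt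
  exact (hc.integral_hasStrictDerivAt 0 x).hasDerivAt.const_sub _

lemma hasDerivAt_PsiD2 (x : ℝ) : HasDerivAt PsiD2 ((1 - x ^ 2) * gaussianPDFReal 0 1 x) x := by
  have h : PsiD2 = fun y => y * gaussianPDFReal 0 1 y := by
    ext y; rw [PsiD2, gaussianPDFReal_zero_one]; ring
  rw [h]
  exact ((hasDerivAt_id x).mul (hasDerivAt_gaussianPDFReal_zero_one x)).congr_deriv
    (by rw [gaussianPDFReal_zero_one]; simp only [id]; ring)

lemma deriv_Psi : deriv Psi = -gaussianPDFReal 0 1 :=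
  funext fun x => (hasDerivAt_Psi x).deriv

lemma deriv_neg_gaussianPDFReal : deriv (-gaussianPDFReal 0 1) = PsiD2 := by
  ext x
  rw [deriv.neg, (hasDerivAt_gaussianPDFReal_zero_one x).deriv, PsiD2, gaussianPDFReal_zero_one]
  ring

lemma deriv_PsiD2 : deriv PsiD2 = fun x => (1 - x ^ 2) * gaussianPDFReal 0 1 x :=
  funext fun x => (hasDerivAt_PsiD2 x).deriv

lemma contDiff_Psi : ContDiff ℝ 3 Psi := by
  rw [show (3 : WithTop ℕ∞) = 2 + 1 from rfl, contDiff_succ_iff_deriv, deriv_Psi]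
  refine ⟨fun x => (hasDerivAt_Psi x).differentiableAt, by simp, ?_⟩
  refine ContDiff.neg ?_
  simp only [funext gaussianPDFReal_zero_one]
  fun_prop

lemma iteratedDeriv_three_Psi :
    iteratedDeriv 3 Psi = fun x => (1 - x ^ 2) * gaussianPDFReal 0 1 x := by
  rw [iteratedDeriv_succ, iteratedDeriv_succ, iteratedDeriv_one, deriv_Psi,
    deriv_neg_gaussianPDFReal, deriv_PsiD2]

lemma abs_one_sub_sq_mul_gaussianPDFReal_le (x : ℝ) :
    |(1 - x ^ 2) * gaussianPDFReal 0 1 x| ≤ (Real.sqrt (2 * Real.pi))⁻¹ := by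
  -- `1 - x² ≤ 1 + x²/2 ≤ e^{x²/2}` and `x² - 1 < (1 + x²/4)² ≤ (e^{x²/4})²`
  have hexp : |1 - x ^ 2| ≤ Real.exp (x ^ 2 / 2) := by
    have h1 := Real.add_one_le_exp (x ^ 2 / 2)
    have h2 := Real.add_one_le_exp (x ^ 2 / 4)
    have h3 : Real.exp (x ^ 2 / 2) = Real.exp (x ^ 2 / 4) ^ 2 := by
      rw [← Real.exp_nat_mul]; ring_nf
    rw [abs_le]; constructor <;> nlinarith [sq_nonneg x, sq_nonneg (x ^ 2 / 4)]
  rw [abs_mul, abs_of_nonneg (gaussianPDFReal_nonneg 0 1 x), gaussianPDFReal_zero_one]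
  calc |1 - x ^ 2| * ((Real.sqrt (2 * Real.pi))⁻¹ * Real.exp (-x ^ 2 / 2))
      ≤ Real.exp (x ^ 2 / 2) * ((Real.sqrt (2 * Real.pi))⁻¹ * Real.exp (-x ^ 2 / 2)) := by
        gcongr
    _ = (Real.sqrt (2 * Real.pi))⁻¹ := by
        rw [mul_left_comm, ← Real.exp_add]; ring_nf; simp

lemma abs_Psi_add_sub_le (a h : ℝ) :
    |Psi (a + h) - Psi a - h * -gaussianPDFReal 0 1 a - h ^ 2 / 2 * PsiD2 a|
      ≤ (6 * Real.sqrt (2 * Real.pi))⁻¹ * |h| ^ 3 := by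
  calc |Psi (a + h) - Psi a - h * -gaussianPDFReal 0 1 a - h ^ 2 / 2 * PsiD2 a|
      = |Psi (a + h)
          - ∑ k ∈ Finset.range (2 + 1), iteratedDeriv k Psi a * (a + h - a) ^ k / k !| := by
        simp only [Finset.sum_range_succ, Finset.sum_range_zero, iteratedDeriv_zero,
          iteratedDeriv_succ, deriv_Psi, deriv_neg_gaussianPDFReal]
        norm_num
        ring_nf
    _ ≤ (Real.sqrt (2 * Real.pi))⁻¹ * |a + h - a| ^ (2 + 1) / (2 + 1)! :=
        abs_sub_sum_iteratedDeriv_le contDiff_Psi (fun x => by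
          rw [iteratedDeriv_three_Psi]; exact abs_one_sub_sq_mul_gaussianPDFReal_le x) a (a + h)
    _ = (6 * Real.sqrt (2 * Real.pi))⁻¹ * |h| ^ 3 := by
        norm_num [Nat.factorial]
        ring

lemma gaussianReal_Ici (a : ℝ) : gaussianReal 0 1 (Set.Ici a) = ENNReal.ofReal (Psi a) := by
  rw [gaussianReal_apply_eq_integral 0 one_ne_zero, integral_Ici_eq_integral_Ioi,
    Psi_eq_setIntegral_gaussianPDFReal]

lemma gaussianReal_sq_Ici {σ : ℝ} (hσ : 0 < σ) (c : ℝ) :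
    gaussianReal 0 ⟨σ ^ 2, sq_nonneg σ⟩ (Set.Ici c) = ENNReal.ofReal (Psi (c / σ)) := by
  have hmap : (gaussianReal 0 1).map (σ * ·) = gaussianReal 0 ⟨σ ^ 2, sq_nonneg σ⟩ := by
    rw [gaussianReal_map_const_mul, mul_zero, mul_one]; rfl
  have hpre : (σ * ·) ⁻¹' Set.Ici c = Set.Ici (c / σ) := by
    ext x; simp [div_le_iff₀ hσ, mul_comm]
  rw [← hmap, Measure.map_apply (measurable_const_mul σ) measurableSet_Ici, hpre, gaussianReal_Ici]

lemma Psi_nonneg (x : ℝ) : 0 ≤ Psi x :=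
  setIntegral_nonneg measurableSet_Ioi fun _ _ => by positivity

lemma Psi_le_one (x : ℝ) : Psi x ≤ 1 := by
  have h : gaussianReal 0 1 (Set.Ici x) ≤ 1 := prob_le_one
  rwa [gaussianReal_Ici, ENNReal.ofReal_le_one] at h

section Probability

variable {Ω : Type*} [MeasurableSpace Ω] {P : Measure Ω}

lemma measure_le_add_eq_lintegral_map [IsFiniteMeasure P] {X Y : Ω → ℝ} (hX : Measurable X)
    (hY : Measurable Y) (hXY : IndepFun X Y P) (u : ℝ) :
    P {ω | u ≤ Y ω + X ω} = ∫⁻ ω, P.map Y (Set.Ici (u - X ω)) ∂P := by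
  have hS : MeasurableSet {p : ℝ × ℝ | u ≤ p.2 + p.1} :=
    measurableSet_le measurable_const (measurable_snd.add measurable_fst)
  have hsection : ∀ x : ℝ, Prod.mk x ⁻¹' {p : ℝ × ℝ | u ≤ p.2 + p.1} = Set.Ici (u - x) := by
    intro x; ext y; simp
  rw [← Set.preimage_ofPred_eq (p := fun p : ℝ × ℝ => u ≤ p.2 + p.1) (f := fun ω => (X ω, Y ω)),
    ← Measure.map_apply (hX.prodMk hY) hS,
    (indepFun_iff_map_prod_eq_prod_map_map hX.aemeasurable hY.aemeasurable).mp hXY,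
    Measure.prod_apply hS, lintegral_map _ hX]
  · simp_rw [hsection]
  · exact measurable_measure_prodMk_left hS

lemma lintegral_measure_setOf_eq_mul {E : Type*} [MeasurableSpace E] [SFinite P]
    (μ : Measure E) [SFinite μ] {p : Ω → E → Prop}
    (hp : MeasurableSet {x : Ω × E | p x.1 x.2}) {T : Set E} (hT : MeasurableSet T) {c : ℝ≥0∞}
    (hc : ∀ t ∈ T, P {ω | p ω t} = c) :
    ∫⁻ ω, μ {t ∈ T | p ω t} ∂P = μ T * c := by
  have hS : MeasurableSet {x : Ω × E | x.2 ∈ T ∧ p x.1 x.2} := (measurable_snd hT).inter hp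
  have hsection : ∀ t, P {ω | t ∈ T ∧ p ω t} = T.indicator (fun _ => c) t := by
    intro t
    by_cases ht : t ∈ T <;> simp [ht, hc]
  calc ∫⁻ ω, μ {t ∈ T | p ω t} ∂P = (P.prod μ) {x : Ω × E | x.2 ∈ T ∧ p x.1 x.2} :=
        (Measure.prod_apply hS).symm
    _ = ∫⁻ t, T.indicator (fun _ => c) t ∂μ := by
        rw [Measure.prod_apply_symm hS]
        exact lintegral_congr fun t => hsection t
    _ = μ T * c := by rw [lintegral_indicator_const hT, mul_comm]

lemma integral_measure_setOf_eq_mul {E : Type*} [MeasurableSpace E] [SFinite P]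
    (μ : Measure E) [SFinite μ] {p : Ω → E → Prop}
    (hp : MeasurableSet {x : Ω × E | p x.1 x.2}) {T : Set E} (hT : MeasurableSet T)
    (hT_fin : μ T < ∞) {c : ℝ≥0∞} (hc : ∀ t ∈ T, P {ω | p ω t} = c) :
    ∫ ω, (μ {t ∈ T | p ω t}).toReal ∂P = (μ T).toReal * c.toReal := by
  have hS : MeasurableSet {x : Ω × E | x.2 ∈ T ∧ p x.1 x.2} := (measurable_snd hT).inter hp
  have hmeas : Measurable fun ω => μ {t ∈ T | p ω t} := measurable_measure_prodMk_left hS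
  rw [integral_toReal hmeas.aemeasurable
      (ae_of_all _ fun ω => (measure_mono (Set.sep_subset T _)).trans_lt hT_fin),
    lintegral_measure_setOf_eq_mul μ hp hT hc, ENNReal.toReal_mul]

lemma MeasureTheory.Integrable.pow_of_abs_pow [IsFiniteMeasure P] {X : Ω → ℝ} {n : ℕ}
    (hXn : Integrable (fun ω => |X ω| ^ n) P) (hX : AEStronglyMeasurable X P) {k : ℕ}
    (hkn : k ≤ n) : Integrable (fun ω => X ω ^ k) P := by
  refine (hXn.add (integrable_const 1)).mono' (hX.pow k) (ae_of_all _ fun ω => ?_)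
  change |X ω ^ k| ≤ |X ω| ^ n + 1
  rw [abs_pow]
  rcases le_total |X ω| 1 with h | h
  · linarith [pow_le_one₀ (n := k) (abs_nonneg (X ω)) h, pow_nonneg (abs_nonneg (X ω)) n]
  · linarith [pow_le_pow_right₀ h hkn]

lemma integrable_Psi_comp [IsFiniteMeasure P] {Y : Ω → ℝ} (hY : AEStronglyMeasurable Y P) :
    Integrable (fun ω => Psi (Y ω)) P :=
  (integrable_const 1).mono' (contDiff_Psi.continuous.comp_aestronglyMeasurable hY)
    (ae_of_all _ fun ω => by
      rw [Real.norm_eq_abs, abs_of_nonneg (Psi_nonneg _)]; exact Psi_le_one _)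

lemma abs_integral_comp_add_mul_sub_le [IsProbabilityMeasure P] {f : ℝ → ℝ} {a f₁ f₂ K : ℝ}
    (hf : ∀ h, |f (a + h) - f a - h * f₁ - h ^ 2 / 2 * f₂| ≤ K * |h| ^ 3)
    {X : Ω → ℝ} (hX : AEStronglyMeasurable X P) (hX3 : Integrable (fun ω => |X ω| ^ 3) P)
    (hX_mean : ∫ ω, X ω ∂P = 0) (c : ℝ) (hfX : Integrable (fun ω => f (a + c * X ω)) P) :
    |∫ ω, f (a + c * X ω) ∂P - f a - c ^ 2 * (∫ ω, X ω ^ 2 ∂P) / 2 * f₂|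
      ≤ K * |c| ^ 3 * ∫ ω, |X ω| ^ 3 ∂P := by
  have hX1 : Integrable X P := by
    simpa using hX3.pow_of_abs_pow hX (by norm_num : 1 ≤ 3)
  have hX2 := hX3.pow_of_abs_pow hX (by norm_num : 2 ≤ 3)
  have hlin : Integrable (fun ω => f a + c * f₁ * X ω) P :=
    (integrable_const _).add (hX1.const_mul _)
  have hpoly : Integrable (fun ω => f a + c * f₁ * X ω + c ^ 2 / 2 * f₂ * X ω ^ 2) P :=
    hlin.add (hX2.const_mul _)
  have hremainder : ∫ ω, f (a + c * X ω) ∂P - f a - c ^ 2 * (∫ ω, X ω ^ 2 ∂P) / 2 * f₂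
      = ∫ ω, (f (a + c * X ω) - (f a + c * f₁ * X ω + c ^ 2 / 2 * f₂ * X ω ^ 2)) ∂P := by
    rw [integral_sub hfX hpoly, integral_add hlin (hX2.const_mul _),
      integral_add (integrable_const _) (hX1.const_mul _), integral_const, integral_const_mul,
      integral_const_mul, hX_mean]
    simp only [probReal_univ, smul_eq_mul]
    ring
  rw [hremainder, ← integral_const_mul]
  refine (abs_integral_le_integral_abs).trans
    (integral_mono (hfX.sub hpoly).abs (hX3.const_mul _) fun ω => ?_)
  calc |f (a + c * X ω) - (f a + c * f₁ * X ω + c ^ 2 / 2 * f₂ * X ω ^ 2)|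
      = |f (a + c * X ω) - f a - c * X ω * f₁ - (c * X ω) ^ 2 / 2 * f₂| := by ring_nf
    _ ≤ K * |c * X ω| ^ 3 := hf _
    _ = K * |c| ^ 3 * |X ω| ^ 3 := by rw [abs_mul, mul_pow, mul_assoc]

lemma measure_le_add_mul_eq_integral_Psi [IsProbabilityMeasure P] {X Y : Ω → ℝ}
    (hX : Measurable X) (hY : Measurable Y) (hXY : IndepFun X Y P) {σ : ℝ} (hσ : 0 < σ)
    (hY_law : P.map Y = gaussianReal 0 ⟨σ ^ 2, sq_nonneg σ⟩) (ε u : ℝ) :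
    P {ω | u ≤ Y ω + ε * X ω} = ENNReal.ofReal (∫ ω, Psi (u / σ + -ε / σ * X ω) ∂P) := by
  have hεX : IndepFun (fun ω => ε * X ω) Y P :=
    hXY.comp (measurable_const_mul ε) measurable_id
  have htail : ∀ x : ℝ, (u - ε * x) / σ = u / σ + -ε / σ * x := fun x => by ring
  rw [measure_le_add_eq_lintegral_map (hX.const_mul ε) hY hεX, hY_law,
    ofReal_integral_eq_lintegral_ofReal
      (integrable_Psi_comp (by fun_prop)) (ae_of_all _ fun _ => Psi_nonneg _)]
  simp_rw [gaussianReal_sq_Ici hσ, htail]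

end Probability

/-- Expansion of the normalized mean excursion area of the perturbed field
`f(t) = g(t) + εX`, with explicit cubic error bound. -/
theorem mean_excursion_area_perturbed_expansion
    {Ω : Type*} [MeasurableSpace Ω] (P : Measure Ω) [IsProbabilityMeasure P]
    (g : Ω → (ℝ × ℝ) → ℝ)
    (hg_meas : Measurable (fun p : Ω × (ℝ × ℝ) => g p.1 p.2))
    (σ : ℝ) (hσ : 0 < σ)
    (hg_law : ∀ t : ℝ × ℝ,
      Measure.map (fun ω => g ω t) P = gaussianReal 0 ⟨σ ^ 2, sq_nonneg σ⟩)
    (X : Ω → ℝ) (hX_meas : Measurable X)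
    (hX_mean : ∫ ω, X ω ∂P = 0)
    (hX3 : Integrable (fun ω => |X ω| ^ 3) P)
    (hindep : ∀ t : ℝ × ℝ, IndepFun X (fun ω => g ω t) P)
    (ε : ℝ) (hε : 0 < ε)
    (T : Set (ℝ × ℝ)) (hT_meas : MeasurableSet T)
    (hT_pos : 0 < volume T) (hT_fin : volume T < ⊤)
    (u : ℝ) :
    |(∫ ω, (volume {t ∈ T | u ≤ g ω t + ε * X ω}).toReal ∂P) / (volume T).toReal
        - Psi (u / σ)
        - ε ^ 2 * (∫ ω, (X ω) ^ 2 ∂P) / (2 * σ ^ 2) * PsiD2 (u / σ)|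
      ≤ ε ^ 3 * (∫ ω, |X ω| ^ 3 ∂P) / (6 * σ ^ 3 * Real.sqrt (2 * Real.pi)) := by
  have hexcursion : MeasurableSet {p : Ω × (ℝ × ℝ) | u ≤ g p.1 p.2 + ε * X p.1} :=
    measurableSet_le measurable_const (hg_meas.add ((hX_meas.comp measurable_fst).const_mul ε))
  have hcover : ∀ t ∈ T, P {ω | u ≤ g ω t + ε * X ω}
      = ENNReal.ofReal (∫ ω, Psi (u / σ + -ε / σ * X ω) ∂P) := fun t _ =>
    measure_le_add_mul_eq_integral_Psi hX_meas
      (hg_meas.comp (measurable_id.prodMk measurable_const)) (hindep t) hσ (hg_law t) ε u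
  rw [integral_measure_setOf_eq_mul volume hexcursion hT_meas hT_fin hcover,
    ENNReal.toReal_ofReal (integral_nonneg fun _ => Psi_nonneg _),
    mul_div_cancel_left₀ _ (ENNReal.toReal_pos hT_pos.ne' hT_fin.ne).ne']
  have htaylor := abs_integral_comp_add_mul_sub_le (abs_Psi_add_sub_le (u / σ))
    hX_meas.aestronglyMeasurable hX3 hX_mean (-ε / σ) (integrable_Psi_comp (by fun_prop))
  rw [abs_div, abs_neg, abs_of_pos hε, abs_of_pos hσ] at htaylor
  convert htaylor using 2 <;> field_simp
end

section
/- Let η be a real random variable with E[|η|³] < ∞ and let φ : ℝ → ℝ be twice differentiable with second derivative Lipschitz with constant L ≥ 0. Then φ(η) is integrable and | E[φ(η)] − φ(E[η]) − (1/2) φ''(E[η]) · Var(η) | ≤ (L/6) · E[ |η − E[η]|³ ]. -/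
/-!
Taylor's formula with a Lipschitz second derivative bounds the pointwise remainder
`φ x - φ m - φ' m (x - m) - φ'' m (x - m)² / 2` by `L |x - m|³ / 6`. Taking `m = E[η]`, the
linear term has expectation zero and the quadratic one has expectation `φ'' m Var(η) / 2`;
integrating the pointwise bound gives the cubic error term, and the finite third moment makes
every term integrable.
-/

open MeasureTheory ProbabilityTheory

section Taylor

lemma abs_sub_le_of_abs_deriv_le_mul_pow {f f' : ℝ → ℝ} (hf : ∀ x, HasDerivAt f (f' x) x)
    (hf' : Continuous f') {a C : ℝ} {n : ℕ} (hbound : ∀ t, |f' t| ≤ C * |t - a| ^ n)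
    (x : ℝ) :
    |f x - f a| ≤ C / (n + 1) * |x - a| ^ (n + 1) := by
  rw [← intervalIntegral.integral_eq_sub_of_hasDerivAt (fun t _ => hf t)
    (hf'.intervalIntegrable a x)]
  have hbound_cont : Continuous fun t => C * |t - a| ^ n := by fun_prop
  calc |∫ t in a..x, f' t| ≤ ∫ t in Set.uIoc a x, |f' t| := by
        simpa only [Real.norm_eq_abs] using
          intervalIntegral.norm_integral_le_integral_norm_uIoc (f := f') (a := a) (b := x)
    _ ≤ ∫ t in Set.uIoc a x, C * |t - a| ^ n :=
        setIntegral_mono_on hf'.abs.integrableOn_uIoc hbound_cont.integrableOn_uIoc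
          measurableSet_uIoc fun t _ => hbound t
    _ = C / (n + 1) * |x - a| ^ (n + 1) := by
        rw [integral_const_mul, integral_pow_abs_sub_uIoc]
        ring

variable {φ φ' φ'' : ℝ → ℝ} {L : NNReal}

lemma abs_sub_sub_mul_le_of_lipschitzWith (hφ' : ∀ x, HasDerivAt φ' (φ'' x) x)
    (hφ'' : LipschitzWith L φ'') (m x : ℝ) :
    |φ' x - φ' m - φ'' m * (x - m)| ≤ L / 2 * |x - m| ^ 2 := by
  have key := abs_sub_le_of_abs_deriv_le_mul_pow (f := fun y => φ' y - φ'' m * y)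
    (f' := fun y => φ'' y - φ'' m)
    (fun y => ((hφ' y).sub ((hasDerivAt_id y).const_mul (φ'' m))).congr_deriv (by simp))
    (hφ''.continuous.sub continuous_const) (a := m) (C := L) (n := 1)
    (fun t => by simpa [Real.dist_eq] using hφ''.dist_le_mul t m) x
  convert key using 2 <;> norm_num
  ring

lemma abs_taylor_remainder_two_le_of_lipschitzWith (hφ : ∀ x, HasDerivAt φ (φ' x) x)
    (hφ' : ∀ x, HasDerivAt φ' (φ'' x) x) (hφ'' : LipschitzWith L φ'') (m x : ℝ) :
    |φ x - φ m - φ' m * (x - m) - φ'' m / 2 * (x - m) ^ 2| ≤ L / 6 * |x - m| ^ 3 := by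
  have hφ'_cont : Continuous φ' := continuous_iff_continuousAt.2 fun y => (hφ' y).continuousAt
  have key := abs_sub_le_of_abs_deriv_le_mul_pow
    (f := fun y => φ y - φ' m * y - φ'' m / 2 * (y - m) ^ 2)
    (f' := fun y => φ' y - φ' m - φ'' m * (y - m))
    (fun y => (((hφ y).sub ((hasDerivAt_id y).const_mul (φ' m))).sub
      ((((hasDerivAt_id y).sub_const m).pow 2).const_mul (φ'' m / 2))).congr_deriv
        (by simp only [id]; push_cast; ring))
    (by fun_prop) (a := m) (C := L / 2) (n := 2)
    (abs_sub_sub_mul_le_of_lipschitzWith hφ' hφ'' m) x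
  convert key using 2 <;> ring

end Taylor

section Expectation

variable {Ω : Type*} [MeasurableSpace Ω] {μ : Measure Ω}

lemma memLp_of_integrable_abs_pow {f : Ω → ℝ} (hf : AEStronglyMeasurable f μ) {n : ℕ}
    (hn : n ≠ 0) (hint : Integrable (fun ω => |f ω| ^ n) μ) : MemLp f n μ := by
  rw [← integrable_norm_rpow_iff hf (by simpa) (by simp)]
  simpa using hint

lemma integrable_of_abs_sub_le {f g h : Ω → ℝ} (hf : AEStronglyMeasurable f μ)
    (hg : Integrable g μ) (hh : Integrable h μ) (hle : ∀ ω, |f ω - g ω| ≤ h ω) :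
    Integrable f μ := by
  have hfg : Integrable (fun ω => f ω - g ω) μ :=
    hh.mono' (hf.sub hg.aestronglyMeasurable) (.of_forall hle)
  exact (hfg.add hg).congr (.of_forall fun ω => by simp)

lemma abs_integral_sub_integral_le_of_abs_sub_le {f g h : Ω → ℝ} (hf : Integrable f μ)
    (hg : Integrable g μ) (hh : Integrable h μ) (hle : ∀ ω, |f ω - g ω| ≤ h ω) :
    |∫ ω, f ω ∂μ - ∫ ω, g ω ∂μ| ≤ ∫ ω, h ω ∂μ := by
  rw [← integral_sub hf hg]
  exact (abs_integral_le_integral_abs).trans (integral_mono (hf.sub hg).abs hh hle)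

variable [IsProbabilityMeasure μ] {X : Ω → ℝ}

lemma integrable_quadratic_sub_integral (hX : MemLp X 2 μ) (a b c : ℝ) :
    Integrable (fun ω => a + b * (X ω - μ[X]) + c * (X ω - μ[X]) ^ 2) μ :=
  ((integrable_const a).add (((hX.integrable one_le_two).sub (integrable_const _)).const_mul b)).add
    ((hX.sub (memLp_const _)).integrable_sq.const_mul c)

lemma integral_quadratic_sub_integral (hX : MemLp X 2 μ) (a b c : ℝ) :
    ∫ ω, (a + b * (X ω - μ[X]) + c * (X ω - μ[X]) ^ 2) ∂μ = a + c * Var[X; μ] := by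
  have hX1 : Integrable X μ := hX.integrable one_le_two
  have hlin : Integrable (fun ω => b * (X ω - μ[X])) μ :=
    (hX1.sub (integrable_const _)).const_mul b
  have hsq : Integrable (fun ω => c * (X ω - μ[X]) ^ 2) μ :=
    (hX.sub (memLp_const _)).integrable_sq.const_mul c
  have haff : Integrable (fun ω => a + b * (X ω - μ[X])) μ := (integrable_const a).add hlin
  rw [integral_add haff hsq, integral_add (integrable_const a) hlin,
    integral_const_mul, integral_const_mul, integral_sub hX1 (integrable_const _),
    variance_eq_integral hX.aestronglyMeasurable.aemeasurable]
  simp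

end Expectation

/-- Lemma 3.4: second-order expansion of `E[φ(η)]` with cubic remainder, for `φ`
twice differentiable with Lipschitz second derivative. -/
theorem second_order_expansion_of_expectation
    {Ω : Type*} [MeasurableSpace Ω] (P : Measure Ω) [IsProbabilityMeasure P]
    (η : Ω → ℝ) (hη_meas : Measurable η)
    (hη3 : Integrable (fun ω => |η ω| ^ 3) P)
    (φ φ' φ'' : ℝ → ℝ)
    (hφ' : ∀ x : ℝ, HasDerivAt φ (φ' x) x)
    (hφ'' : ∀ x : ℝ, HasDerivAt φ' (φ'' x) x)
    (L : NNReal) (hφ''_lip : LipschitzWith L φ'') :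
    Integrable (fun ω => φ (η ω)) P ∧
    |(∫ ω, φ (η ω) ∂P) - φ (∫ ω, η ω ∂P)
        - 1 / 2 * φ'' (∫ ω, η ω ∂P) * variance η P|
      ≤ (L : ℝ) / 6 * ∫ ω, |η ω - ∫ ω', η ω' ∂P| ^ 3 ∂P := by
  set m := ∫ ω, η ω ∂P
  have hη : MemLp η 3 P :=
    memLp_of_integrable_abs_pow hη_meas.aestronglyMeasurable three_ne_zero hη3
  have hη2 : MemLp η 2 P := hη.mono_exponent (by norm_num)
  have hcube : Integrable (fun ω => L / 6 * |η ω - m| ^ 3) P := by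
    simpa using (hη.sub (memLp_const m)).integrable_norm_pow'.const_mul (L / 6 : ℝ)
  have hquad := integrable_quadratic_sub_integral hη2 (φ m) (φ' m) (φ'' m / 2)
  have hbound (ω : Ω) :
      |φ (η ω) - (φ m + φ' m * (η ω - m) + φ'' m / 2 * (η ω - m) ^ 2)| ≤
        L / 6 * |η ω - m| ^ 3 := by
    rw [← sub_sub, ← sub_sub]
    exact abs_taylor_remainder_two_le_of_lipschitzWith hφ' hφ'' hφ''_lip m (η ω)
  have hφ_cont : Continuous φ := continuous_iff_continuousAt.2 fun x => (hφ' x).continuousAt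
  have hφη : Integrable (fun ω => φ (η ω)) P :=
    integrable_of_abs_sub_le (hφ_cont.measurable.comp hη_meas).aestronglyMeasurable
      hquad hcube hbound
  refine ⟨hφη, ?_⟩
  have key := abs_integral_sub_integral_le_of_abs_sub_le hφη hquad hcube hbound
  rw [integral_quadratic_sub_integral hη2, integral_const_mul] at key
  convert key using 2
  ring
end
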